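/- Let A be a modal formula with purely modal uniform pre-interpolant A* (defined as the conjunction of all substitutions of the propositional atoms of A by ⊤/⊥, in a propositional skeleton of A). Then for any purely modal formula B, if ⊢ B → A in classical propositional logic over the modal language, then ⊢ B → A*. -/

import Mathlib

/-- Formulas of the modal language with atoms, ⊥, → and □. -/
inductive Fml : Type
  | atom : ℕ → Fml
  | bot  : Fml
  | imp  : Fml → Fml → Fml
  | box  : Fml → Fml
deriving DecidableEq

/-- Classical Boolean evaluation where boxed formulas behave like atoms:
the valuation `v` is queried on atoms and on boxed formulas. -/
def evalCL (v : Fml → Bool) : Fml → Bool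
  | .atom n => v (.atom n)
  | .bot => false
  | .imp A B => !(evalCL v A) || evalCL v B
  | .box A => v (.box A)

/-- Classical tautology over the modal language (□-formulas act as atoms). -/
def Taut (A : Fml) : Prop := ∀ v, evalCL v A = true

/-- A formula is purely modal if every atom is in the scope of some □. -/
def PurelyModal : Fml → Prop
  | .atom _ => False
  | .bot => True
  | .imp A B => PurelyModal A ∧ PurelyModal B
  | .box _ => True

/-- A formula with no occurrence of □. -/
def BoxFree : Fml → Prop
  | .atom _ => True
  | .bot => True
  | .imp A B => BoxFree A ∧ BoxFree B
  | .box _ => False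

/-- Substitution of formulas for atoms. -/
def subst (s : ℕ → Fml) : Fml → Fml
  | .atom n => s n
  | .bot => .bot
  | .imp A B => .imp (subst s A) (subst s B)
  | .box A => .box (subst s A)

/-- Classical propositional derivability over the modal language. -/
inductive CLderiv : Fml → Prop
  | taut {A} : Taut A → CLderiv A
  | mp {A B} : CLderiv (.imp A B) → CLderiv A → CLderiv B

/-- ⊤, defined as ⊥ → ⊥. -/
def ftop : Fml := .imp .bot .bot

/-- Conjunction, defined from → and ⊥. -/
def fand (A B : Fml) : Fml := .imp (.imp A (.imp B .bot)) .bot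

/-- Conjunction of a list of formulas. -/
def bigConj : List Fml → Fml
  | [] => ftop
  | A :: l => fand A (bigConj l)

/-- The skeleton substitution: atoms `< m` (the `p`-atoms) are left alone,
atoms `≥ m` (the `q`-atoms) are replaced by `□ (B n)`.  So
`A = subst (skSub m B) C` for a propositional skeleton `C` of `A`. -/
def skSub (m : ℕ) (B : ℕ → Fml) (n : ℕ) : Fml :=
  if n < m then .atom n else .box (B n)

/-- The substitution where the `p`-atoms are replaced by ⊤/⊥ according to
`v` and the `q`-atoms by `□ (B n)`. -/
def skSubB (m : ℕ) (B : ℕ → Fml) (v : ℕ → Bool) (n : ℕ) : Fml :=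
  if n < m then (if v n then ftop else .bot) else .box (B n)

/-- The purely modal uniform pre-interpolant
`A* = ⋀_{b⃗ ∈ {⊤,⊥}^m} C(b⃗, □B₀,…)` of `A = C(p⃗, □B₀,…)`. -/
noncomputable def preInterp (m : ℕ) (B : ℕ → Fml) (C : Fml) : Fml :=
  bigConj (((Finset.univ : Finset (Fin m → Bool)).toList).map
    (fun v => subst (skSubB m B (fun n => if h : n < m then v ⟨n, h⟩ else false)) C))

/-!
A derivation `⊢ D → A` is sound for Boolean valuations in which boxed formulas are atoms.
Given such a valuation `v` making `D` true and a choice `b⃗` of truth values for the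
`p`-atoms, change `v` on the `p`-atoms only, to `b⃗`. The purely modal `D` stays true, so
`A = C(p⃗, □B⃗)` becomes true, and since the skeleton `C` is □-free this is exactly the truth
of the conjunct `C(b⃗, □B⃗)` of `A*` under `v`.
-/

theorem Taut.of_CLderiv {A : Fml} (h : CLderiv A) : Taut A := by
  induction h with
  | taut h => exact h
  | mp _ _ ihAB ihA =>
    intro v
    simpa [evalCL, ihA v] using ihAB v

theorem evalCL_imp_eq_true {v : Fml → Bool} {A B : Fml} :
    evalCL v (.imp A B) = true ↔ (evalCL v A = true → evalCL v B = true) := by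
  cases h : evalCL v A <;> simp [evalCL, h]

theorem evalCL_bigConj (v : Fml → Bool) (l : List Fml) :
    evalCL v (bigConj l) = l.all (evalCL v) := by
  induction l with
  | nil => simp [bigConj, ftop, evalCL]
  | cons A l ih => simp [bigConj, fand, evalCL, ih]

theorem evalCL_eq_of_purelyModal {v v' : Fml → Bool} (hbox : ∀ A, v (.box A) = v' (.box A))
    {D : Fml} (hD : PurelyModal D) : evalCL v D = evalCL v' D := by
  induction D with
  | atom => exact hD.elim
  | bot => rfl
  | imp A B ihA ihB => simp [evalCL, ihA hD.1, ihB hD.2]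
  | box A => exact hbox A

theorem evalCL_subst_eq_of_boxFree {v v' : Fml → Bool} {σ σ' : ℕ → Fml}
    (h : ∀ n, evalCL v (σ n) = evalCL v' (σ' n)) {C : Fml} (hC : BoxFree C) :
    evalCL v (subst σ C) = evalCL v' (subst σ' C) := by
  induction C with
  | atom n => exact h n
  | bot => rfl
  | imp A B ihA ihB => simp [subst, evalCL, ihA hC.1, ihB hC.2]
  | box => exact hC.elim

def updateAtoms (v : Fml → Bool) (m : ℕ) (w : ℕ → Bool) : Fml → Bool
  | .atom n => if n < m then w n else v (.atom n)
  | f => v f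

theorem evalCL_subst_skSubB (v : Fml → Bool) (m : ℕ) (B : ℕ → Fml) (w : ℕ → Bool)
    {C : Fml} (hC : BoxFree C) :
    evalCL v (subst (skSubB m B w) C) = evalCL (updateAtoms v m w) (subst (skSub m B) C) := by
  refine evalCL_subst_eq_of_boxFree (fun n => ?_) hC
  by_cases hn : n < m
  · cases hw : w n <;> simp [skSubB, skSub, updateAtoms, hn, hw, evalCL, ftop]
  · simp [skSubB, skSub, updateAtoms, hn, evalCL]

theorem evalCL_preInterp_eq_true {v : Fml → Bool} {m : ℕ} {B : ℕ → Fml} {C : Fml} :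
    evalCL v (preInterp m B C) = true ↔ ∀ w : Fin m → Bool,
      evalCL v (subst (skSubB m B (fun n => if h : n < m then w ⟨n, h⟩ else false)) C) =
        true := by
  simp [preInterp, evalCL_bigConj]

/-- For any purely modal formula `D`, if `⊢ D → A` (where `A = C(p⃗,□B⃗)` with
□-free propositional skeleton `C`), then `⊢ D → A*` for the purely modal
uniform pre-interpolant `A*` of `A`. -/
theorem preInterp_uniform (m : ℕ) (B : ℕ → Fml) (C : Fml) (hC : BoxFree C)
    (D : Fml) (hD : PurelyModal D)
    (h : CLderiv (.imp D (subst (skSub m B) C))) :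
    CLderiv (.imp D (preInterp m B C)) := by
  refine .taut fun v => evalCL_imp_eq_true.2 fun hvD => evalCL_preInterp_eq_true.2 fun w => ?_
  set v' := updateAtoms v m fun n => if h : n < m then w ⟨n, h⟩ else false
  have hv'D : evalCL v' D = true :=
    (evalCL_eq_of_purelyModal (v := v) (v' := v') (fun _ => rfl) hD).symm.trans hvD
  rw [evalCL_subst_skSubB v m B _ hC]
  exact evalCL_imp_eq_true.1 (Taut.of_CLderiv h v') hv'D
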